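/- arXiv:math/0604042 — 2 statements merged into one kernel-verified Lean document; each statement's English description precedes it below -/
import Mathlib

section
/- Define two connected bicolored graphs Γ₁ and Γ₂ to be bisimilar, written Γ₁ ∼ Γ₂, if there exists a bicolored graph Γ' weakly covered by both Γ₁ and Γ₂. Then bisimilarity is an equivalence relation on connected bicolored graphs (reflexivity, symmetry, and transitivity hold). -/
/-- A bicolored graph: a multigraph (edges have unordered pairs of endpoints)
with vertices colored by a two-element set, encoded as `Bool`
(`false` = black, `true` = white). -/
structure BiGraph where
  V : Type
  E : Type
  ends : E → Sym2 V
  color : V → Bool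

namespace BiGraph

/-- Adjacency: some edge has endpoints `{u, v}`. -/
def Adj (G : BiGraph) (u v : G.V) : Prop := ∃ e : G.E, G.ends e = s(u, v)

/-- Connectivity: any two vertices are joined by an edge path. -/
def Connected (G : BiGraph) : Prop := ∀ u v : G.V, Relation.ReflTransGen G.Adj u v

/-- A color-preserving graph homomorphism. -/
def IsHom (G G' : BiGraph) (fV : G.V → G'.V) (fE : G.E → G'.E) : Prop :=
  (∀ e : G.E, G'.ends (fE e) = (G.ends e).map fV) ∧ ∀ v : G.V, G'.color (fV v) = G.color v

/-- A weak covering: a color-preserving homomorphism such that every edge at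
`fV v` lifts to an edge at `v`. -/
def IsWeakCovering (G G' : BiGraph) (fV : G.V → G'.V) (fE : G.E → G'.E) : Prop :=
  IsHom G G' fV fE ∧
    ∀ (v : G.V) (e' : G'.E), fV v ∈ G'.ends e' → ∃ e : G.E, v ∈ G.ends e ∧ fE e = e'

/-- `G` weakly covers `G'`. -/
def Covers (G G' : BiGraph) : Prop := ∃ fV fE, IsWeakCovering G G' fV fE

/-- Bisimilarity: the two graphs weakly cover a common graph. -/
def Bisimilar (G₁ G₂ : BiGraph) : Prop := ∃ G' : BiGraph, Covers G₁ G' ∧ Covers G₂ G'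

/-- An isomorphism of bicolored graphs: a bijective color-preserving homomorphism. -/
def IsIso (G G' : BiGraph) (fV : G.V → G'.V) (fE : G.E → G'.E) : Prop :=
  IsHom G G' fV fE ∧ Function.Bijective fV ∧ Function.Bijective fE

def Isomorphic (G G' : BiGraph) : Prop := ∃ fV fE, IsIso G G' fV fE

/-- Every vertex has countable valence. -/
def CountableValence (G : BiGraph) : Prop := ∀ v : G.V, Countable {e : G.E // v ∈ G.ends e}

/-- A tree: connected, and no edge's endpoints can be joined avoiding that edge
(equivalently: no loops, no multiple edges, no cycles). -/
def IsTree (G : BiGraph) : Prop :=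
  G.Connected ∧ ∀ (e₀ : G.E) (u w : G.V), G.ends e₀ = s(u, w) →
    ¬ Relation.ReflTransGen (fun a b => ∃ e : G.E, e ≠ e₀ ∧ G.ends e = s(a, b)) u w

/-! ### Auxiliary material -/

theorem covers_refl (G : BiGraph) : G.Covers G :=
  ⟨id, id, ⟨fun e => by simp, fun _ => rfl⟩, fun v e' hv => ⟨e', hv, rfl⟩⟩

theorem covers_trans {G G' G'' : BiGraph} (h : G.Covers G') (h' : G'.Covers G'') :
    G.Covers G'' := by
  obtain ⟨fV, fE, ⟨⟨hfe, hfc⟩, hfl⟩⟩ := h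
  obtain ⟨gV, gE, ⟨⟨hge, hgc⟩, hgl⟩⟩ := h'
  refine ⟨gV ∘ fV, gE ∘ fE, ⟨⟨fun e => ?_, fun v => ?_⟩, fun v e'' hv => ?_⟩⟩
  · simp only [Function.comp_apply, hge, hfe, Sym2.map_map]
  · simp [hgc, hfc]
  · obtain ⟨e', he', he'e⟩ := hgl (fV v) e'' hv
    obtain ⟨e, he, hee⟩ := hfl v e' he'
    exact ⟨e, he, by simp [hee, he'e]⟩

section Pushout

variable {A B C : BiGraph}
variable (fV : B.V → A.V) (fE : B.E → A.E) (gV : B.V → C.V) (gE : B.E → C.E)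

/-- Generated equivalence on middle vertices. -/
def Mv : B.V → B.V → Prop := Relation.EqvGen (fun x y => fV x = fV y ∨ gV x = gV y)

/-- Generated equivalence on middle edges. -/
def MeR : B.E → B.E → Prop := Relation.EqvGen (fun x y => fE x = fE y ∨ gE x = gE y)

/-- Gluing relation on the disjoint union of vertex sets. -/
def Rv : (A.V ⊕ B.V ⊕ C.V) → (A.V ⊕ B.V ⊕ C.V) → Prop := fun a b =>
  (∃ x, a = .inl (fV x) ∧ b = .inr (.inl x)) ∨
  (∃ x, a = .inr (.inl x) ∧ b = .inr (.inr (gV x)))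

/-- Gluing relation on the disjoint union of edge sets. -/
def Re : (A.E ⊕ B.E ⊕ C.E) → (A.E ⊕ B.E ⊕ C.E) → Prop := fun a b =>
  (∃ x, a = .inl (fE x) ∧ b = .inr (.inl x)) ∨
  (∃ x, a = .inr (.inl x) ∧ b = .inr (.inr (gE x)))

lemma qv_f (x : B.V) :
    Quot.mk (Rv fV gV) (.inl (fV x)) = Quot.mk (Rv fV gV) (.inr (.inl x)) :=
  Quot.sound (Or.inl ⟨x, rfl, rfl⟩)

lemma qv_g (x : B.V) :
    Quot.mk (Rv fV gV) (.inr (.inl x)) = Quot.mk (Rv fV gV) (.inr (.inr (gV x))) :=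
  Quot.sound (Or.inr ⟨x, rfl, rfl⟩)

lemma qe_f (x : B.E) :
    Quot.mk (Re fE gE) (.inl (fE x)) = Quot.mk (Re fE gE) (.inr (.inl x)) :=
  Quot.sound (Or.inl ⟨x, rfl, rfl⟩)

lemma qe_g (x : B.E) :
    Quot.mk (Re fE gE) (.inr (.inl x)) = Quot.mk (Re fE gE) (.inr (.inr (gE x))) :=
  Quot.sound (Or.inr ⟨x, rfl, rfl⟩)

lemma qv_mid {x y : B.V} (h : Mv fV gV x y) :
    Quot.mk (Rv fV gV) (.inr (.inl x)) = Quot.mk (Rv fV gV) (.inr (.inl y)) := by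
  induction h with
  | rel a b hab =>
    rcases hab with hab | hab
    · rw [← qv_f fV gV a, ← qv_f fV gV b, hab]
    · rw [qv_g fV gV a, qv_g fV gV b, hab]
  | refl a => rfl
  | symm a b h ih => exact ih.symm
  | trans a b c h1 h2 ih1 ih2 => exact ih1.trans ih2

lemma qe_mid {x y : B.E} (h : MeR fE gE x y) :
    Quot.mk (Re fE gE) (.inr (.inl x)) = Quot.mk (Re fE gE) (.inr (.inl y)) := by
  induction h with
  | rel a b hab =>
    rcases hab with hab | hab
    · rw [← qe_f fE gE a, ← qe_f fE gE b, hab]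
    · rw [qe_g fE gE a, qe_g fE gE b, hab]
  | refl a => rfl
  | symm a b h ih => exact ih.symm
  | trans a b c h1 h2 ih1 ih2 => exact ih1.trans ih2

/-- Vertices of `B` attached to a vertex of the disjoint union. -/
def att : (A.V ⊕ B.V ⊕ C.V) → B.V → Prop
  | .inl a, x => fV x = a
  | .inr (.inl y), x => Mv fV gV y x
  | .inr (.inr c), x => gV x = c

lemma att_unique {s : A.V ⊕ B.V ⊕ C.V} {x y : B.V}
    (hx : att fV gV s x) (hy : att fV gV s y) : Mv fV gV x y := by
  cases s with
  | inl a => exact Relation.EqvGen.rel _ _ (Or.inl (hx.trans hy.symm))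
  | inr s =>
    cases s with
    | inl w => exact Relation.EqvGen.trans _ _ _ (Relation.EqvGen.symm _ _ hx) hy
    | inr c => exact Relation.EqvGen.rel _ _ (Or.inr (hx.trans hy.symm))

/-- Explicit description of the equivalence generated by `Rv`. -/
def Pv (s t : A.V ⊕ B.V ⊕ C.V) : Prop :=
  s = t ∨ ∃ x y, att fV gV s x ∧ att fV gV t y ∧ Mv fV gV x y

lemma pv_of_eq {s t : A.V ⊕ B.V ⊕ C.V}
    (h : Quot.mk (Rv fV gV) s = Quot.mk (Rv fV gV) t) : Pv fV gV s t := by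
  have h' := Quot.eqvGen_exact h
  clear h
  induction h' with
  | rel a b hab =>
    rcases hab with ⟨x, rfl, rfl⟩ | ⟨x, rfl, rfl⟩
    · exact Or.inr ⟨x, x, rfl, Relation.EqvGen.refl x, Relation.EqvGen.refl x⟩
    · exact Or.inr ⟨x, x, Relation.EqvGen.refl x, rfl, Relation.EqvGen.refl x⟩
  | refl a => exact Or.inl rfl
  | symm a b h ih =>
    rcases ih with rfl | ⟨x, y, hx, hy, hxy⟩
    · exact Or.inl rfl
    · exact Or.inr ⟨y, x, hy, hx, Relation.EqvGen.symm _ _ hxy⟩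
  | trans a b c h1 h2 ih1 ih2 =>
    rcases ih1 with rfl | ⟨x, y, hx, hy, hxy⟩
    · exact ih2
    · rcases ih2 with rfl | ⟨x', y', hx', hy', hxy'⟩
      · exact Or.inr ⟨x, y, hx, hy, hxy⟩
      · refine Or.inr ⟨x, y', hx, hy', ?_⟩
        exact Relation.EqvGen.trans _ _ _ hxy
          (Relation.EqvGen.trans _ _ _ (att_unique fV gV hy hx') hxy')

variable {fV fE gV gE}

/-- One-step edge transport along the base relation. -/
lemma transport_step (hf : IsWeakCovering B A fV fE) (hg : IsWeakCovering B C gV gE)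
    {x y : B.V} (h : fV x = fV y ∨ gV x = gV y) :
    ∀ e, y ∈ B.ends e → ∃ d, x ∈ B.ends d ∧ MeR fE gE d e := by
  intro e he
  rcases h with h | h
  · have h1 : fV x ∈ A.ends (fE e) := by
      rw [hf.1.1 e, h]
      exact Sym2.mem_map.2 ⟨y, he, rfl⟩
    obtain ⟨d, hd, hde⟩ := hf.2 x (fE e) h1
    exact ⟨d, hd, Relation.EqvGen.rel _ _ (Or.inl hde)⟩
  · have h1 : gV x ∈ C.ends (gE e) := by
      rw [hg.1.1 e, h]
      exact Sym2.mem_map.2 ⟨y, he, rfl⟩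
    obtain ⟨d, hd, hde⟩ := hg.2 x (gE e) h1
    exact ⟨d, hd, Relation.EqvGen.rel _ _ (Or.inr hde)⟩

/-- Edge transport along the generated equivalence on `B`-vertices. -/
lemma transport (hf : IsWeakCovering B A fV fE) (hg : IsWeakCovering B C gV gE)
    {x y : B.V} (h : Mv fV gV x y) :
    (∀ e, y ∈ B.ends e → ∃ d, x ∈ B.ends d ∧ MeR fE gE d e) ∧
    (∀ e, x ∈ B.ends e → ∃ d, y ∈ B.ends d ∧ MeR fE gE d e) := by
  induction h with
  | rel a b hab =>
    exact ⟨transport_step hf hg hab, transport_step hf hg (hab.imp Eq.symm Eq.symm)⟩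
  | refl a => exact ⟨fun e he => ⟨e, he, Relation.EqvGen.refl e⟩,
      fun e he => ⟨e, he, Relation.EqvGen.refl e⟩⟩
  | symm a b h ih => exact ⟨ih.2, ih.1⟩
  | trans a b c h1 h2 ih1 ih2 =>
    constructor
    · intro e he
      obtain ⟨d, hd, hde⟩ := ih2.1 e he
      obtain ⟨d', hd', hd'e⟩ := ih1.1 d hd
      exact ⟨d', hd', Relation.EqvGen.trans _ _ _ hd'e hde⟩
    · intro e he
      obtain ⟨d, hd, hde⟩ := ih1.2 e he
      obtain ⟨d', hd', hd'e⟩ := ih2.2 d hd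
      exact ⟨d', hd', Relation.EqvGen.trans _ _ _ hd'e hde⟩

variable (fV fE gV gE)

/-- Endpoints in the pushout, before taking the edge quotient. -/
def pushEnds : (A.E ⊕ B.E ⊕ C.E) → Sym2 (Quot (Rv fV gV))
  | .inl e => (A.ends e).map (fun v => Quot.mk (Rv fV gV) (.inl v))
  | .inr (.inl e) => (B.ends e).map (fun v => Quot.mk (Rv fV gV) (.inr (.inl v)))
  | .inr (.inr e) => (C.ends e).map (fun v => Quot.mk (Rv fV gV) (.inr (.inr v)))

/-- Colors in the pushout, before taking the vertex quotient. -/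
def pushColor : (A.V ⊕ B.V ⊕ C.V) → Bool
  | .inl a => A.color a
  | .inr (.inl x) => B.color x
  | .inr (.inr c) => C.color c

variable {fV fE gV gE}

lemma pushEnds_sound (hf : IsWeakCovering B A fV fE) (hg : IsWeakCovering B C gV gE)
    {s t : A.E ⊕ B.E ⊕ C.E} (h : Re fE gE s t) :
    pushEnds fV gV s = pushEnds fV gV t := by
  rcases h with ⟨x, rfl, rfl⟩ | ⟨x, rfl, rfl⟩
  · show (A.ends (fE x)).map _ = (B.ends x).map _
    rw [hf.1.1 x, Sym2.map_map]
    congr 1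
    funext v
    exact qv_f fV gV v
  · show (B.ends x).map _ = (C.ends (gE x)).map _
    rw [hg.1.1 x, Sym2.map_map]
    congr 1
    funext v
    exact qv_g fV gV v

lemma pushColor_sound (hf : IsWeakCovering B A fV fE) (hg : IsWeakCovering B C gV gE)
    {s t : A.V ⊕ B.V ⊕ C.V} (h : Rv fV gV s t) :
    pushColor (A := A) (B := B) (C := C) s = pushColor t := by
  rcases h with ⟨x, rfl, rfl⟩ | ⟨x, rfl, rfl⟩
  · exact hf.1.2 x
  · exact (hg.1.2 x).symm

/-- The pushout bicolored graph. -/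
def pushGraph (hf : IsWeakCovering B A fV fE) (hg : IsWeakCovering B C gV gE) : BiGraph where
  V := Quot (Rv fV gV)
  E := Quot (Re fE gE)
  ends := Quot.lift (pushEnds fV gV) (fun _ _ h => pushEnds_sound hf hg h)
  color := Quot.lift pushColor (fun _ _ h => pushColor_sound hf hg h)

theorem covers_push_left (hf : IsWeakCovering B A fV fE) (hg : IsWeakCovering B C gV gE) :
    A.Covers (pushGraph hf hg) := by
  refine ⟨fun a => Quot.mk (Rv fV gV) (.inl a), fun e => Quot.mk (Re fE gE) (.inl e),
    ⟨⟨fun e => rfl, fun v => rfl⟩, ?_⟩⟩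
  intro v ebar hv
  obtain ⟨ehat, rfl⟩ := Quot.exists_rep ebar
  match ehat with
  | .inl e =>
    obtain ⟨w, hw, hq⟩ := Sym2.mem_map.1 hv
    rcases pv_of_eq fV gV hq with heq | ⟨x, y, hx, hy, hxy⟩
    · obtain rfl : w = v := Sum.inl.inj heq
      exact ⟨e, hw, rfl⟩
    · have h1 : fV x ∈ A.ends e := by rw [hx]; exact hw
      obtain ⟨d1, hd1, hfd1⟩ := hf.2 x e h1
      obtain ⟨d2, hd2, hde⟩ := (transport hf hg hxy).2 d1 hd1
      refine ⟨fE d2, ?_, ?_⟩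
      · rw [hf.1.1 d2, ← hy]
        exact Sym2.mem_map.2 ⟨y, hd2, rfl⟩
      · dsimp only
        rw [qe_f fE gE d2, qe_mid fE gE hde, ← qe_f fE gE d1, hfd1]
  | .inr (.inl e2) =>
    obtain ⟨w, hw, hq⟩ := Sym2.mem_map.1 hv
    rcases pv_of_eq fV gV hq with heq | ⟨x, y, hx, hy, hxy⟩
    · exact absurd heq (by simp)
    · have hwy : Mv fV gV w y := Relation.EqvGen.trans _ _ _ hx hxy
      obtain ⟨d, hd, hde⟩ := (transport hf hg hwy).2 e2 hw
      refine ⟨fE d, ?_, ?_⟩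
      · rw [hf.1.1 d, ← hy]
        exact Sym2.mem_map.2 ⟨y, hd, rfl⟩
      · dsimp only
        rw [qe_f fE gE d, qe_mid fE gE hde]
  | .inr (.inr e3) =>
    obtain ⟨w, hw, hq⟩ := Sym2.mem_map.1 hv
    rcases pv_of_eq fV gV hq with heq | ⟨x, y, hx, hy, hxy⟩
    · exact absurd heq (by simp)
    · have h1 : gV x ∈ C.ends e3 := by rw [hx]; exact hw
      obtain ⟨d1, hd1, hgd1⟩ := hg.2 x e3 h1
      obtain ⟨d2, hd2, hde⟩ := (transport hf hg hxy).2 d1 hd1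
      refine ⟨fE d2, ?_, ?_⟩
      · rw [hf.1.1 d2, ← hy]
        exact Sym2.mem_map.2 ⟨y, hd2, rfl⟩
      · dsimp only
        rw [qe_f fE gE d2, qe_mid fE gE hde, qe_g fE gE d1, hgd1]

theorem covers_push_right (hf : IsWeakCovering B A fV fE) (hg : IsWeakCovering B C gV gE) :
    C.Covers (pushGraph hf hg) := by
  refine ⟨fun c => Quot.mk (Rv fV gV) (.inr (.inr c)), fun e => Quot.mk (Re fE gE) (.inr (.inr e)),
    ⟨⟨fun e => rfl, fun v => rfl⟩, ?_⟩⟩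
  intro v ebar hv
  obtain ⟨ehat, rfl⟩ := Quot.exists_rep ebar
  match ehat with
  | .inr (.inr e) =>
    obtain ⟨w, hw, hq⟩ := Sym2.mem_map.1 hv
    rcases pv_of_eq fV gV hq with heq | ⟨x, y, hx, hy, hxy⟩
    · obtain rfl : w = v := Sum.inr.inj (Sum.inr.inj heq)
      exact ⟨e, hw, rfl⟩
    · have h1 : gV x ∈ C.ends e := by rw [hx]; exact hw
      obtain ⟨d1, hd1, hgd1⟩ := hg.2 x e h1
      obtain ⟨d2, hd2, hde⟩ := (transport hf hg hxy).2 d1 hd1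
      refine ⟨gE d2, ?_, ?_⟩
      · rw [hg.1.1 d2, ← hy]
        exact Sym2.mem_map.2 ⟨y, hd2, rfl⟩
      · dsimp only
        rw [← qe_g fE gE d2, qe_mid fE gE hde, qe_g fE gE d1, hgd1]
  | .inr (.inl e2) =>
    obtain ⟨w, hw, hq⟩ := Sym2.mem_map.1 hv
    rcases pv_of_eq fV gV hq with heq | ⟨x, y, hx, hy, hxy⟩
    · exact absurd heq (by simp)
    · have hwy : Mv fV gV w y := Relation.EqvGen.trans _ _ _ hx hxy
      obtain ⟨d, hd, hde⟩ := (transport hf hg hwy).2 e2 hw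
      refine ⟨gE d, ?_, ?_⟩
      · rw [hg.1.1 d, ← hy]
        exact Sym2.mem_map.2 ⟨y, hd, rfl⟩
      · dsimp only
        rw [← qe_g fE gE d, qe_mid fE gE hde]
  | .inl e1 =>
    obtain ⟨w, hw, hq⟩ := Sym2.mem_map.1 hv
    rcases pv_of_eq fV gV hq with heq | ⟨x, y, hx, hy, hxy⟩
    · exact absurd heq (by simp)
    · have h1 : fV x ∈ A.ends e1 := by rw [hx]; exact hw
      obtain ⟨d1, hd1, hfd1⟩ := hf.2 x e1 h1
      obtain ⟨d2, hd2, hde⟩ := (transport hf hg hxy).2 d1 hd1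
      refine ⟨gE d2, ?_, ?_⟩
      · rw [hg.1.1 d2, ← hy]
        exact Sym2.mem_map.2 ⟨y, hd2, rfl⟩
      · dsimp only
        rw [← qe_g fE gE d2, qe_mid fE gE hde, ← qe_f fE gE d1, hfd1]

end Pushout

/-- The key lemma: if a graph weakly covers two graphs, then those graphs weakly
cover a common graph. -/
theorem exists_common_quotient {B A C : BiGraph} (h1 : B.Covers A) (h2 : B.Covers C) :
    ∃ K : BiGraph, A.Covers K ∧ C.Covers K := by
  obtain ⟨fV, fE, hf⟩ := h1
  obtain ⟨gV, gE, hg⟩ := h2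
  exact ⟨pushGraph hf hg, covers_push_left hf hg, covers_push_right hf hg⟩

end BiGraph

/-- Bisimilarity (weakly covering a common graph) is an equivalence
relation on connected bicolored graphs. -/
theorem bisimilar_equivalence :
    (∀ G : BiGraph, G.Connected → BiGraph.Bisimilar G G) ∧
    (∀ G₁ G₂ : BiGraph, BiGraph.Bisimilar G₁ G₂ → BiGraph.Bisimilar G₂ G₁) ∧
    (∀ G₁ G₂ G₃ : BiGraph, G₁.Connected → G₂.Connected → G₃.Connected →
      BiGraph.Bisimilar G₁ G₂ → BiGraph.Bisimilar G₂ G₃ → BiGraph.Bisimilar G₁ G₃) := by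
  refine ⟨fun G _ => ⟨G, G.covers_refl, G.covers_refl⟩,
    fun G₁ G₂ ⟨G', h1, h2⟩ => ⟨G', h2, h1⟩,
    fun G₁ G₂ G₃ _ _ _ ⟨D, h1D, h2D⟩ ⟨E, h2E, h3E⟩ => ?_⟩
  obtain ⟨K, hDK, hEK⟩ := BiGraph.exists_common_quotient h2D h2E
  exact ⟨K, BiGraph.covers_trans h1D hDK, BiGraph.covers_trans h3E hEK⟩
end

section
/- Let Γ and Γ' be connected bicolored graphs with countable valence, and suppose Γ weakly covers Γ'. Then the bicolored trees T(Γ) and T(Γ') obtained by duplicating every edge countably infinitely many times and taking the universal cover (equivalently, by the inductive tree construction with countably infinite multiplicity) are isomorphic as bicolored trees. -/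
namespace BiGraph

variable (G : BiGraph) (v₀ : G.V)

/-- The label (in `G`) of a vertex of the canonical tree, encoded as the
reversed list of steps of a walk starting at the root `v₀`: the label is the
endpoint of the walk. Each step records a copy index in `ℕ` (edges are
duplicated countably often) and the next vertex of `G`. -/
def lab : List (ℕ × G.V) → G.V
  | [] => v₀
  | p :: _ => p.2

/-- Validity of a (reversed) walk: each step moves to a vertex adjacent to the
current endpoint. -/
def ValidW : List (ℕ × G.V) → Prop
  | [] => True
  | p :: t => ValidW t ∧ G.Adj (G.lab v₀ t) p.2

theorem validW_tail (l : List (ℕ × G.V)) (h : G.ValidW v₀ l) : G.ValidW v₀ l.tail := by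
  cases l with
  | nil => exact h
  | cons p t => exact h.1

/-- The canonical bicolored tree of `(G, v₀)`: the universal cover of the graph
obtained from `G` by duplicating each edge countably infinitely often.
Vertices are valid rooted walks; each nonempty walk determines the edge to its
parent (its tail). Colors are inherited from labels. -/
def TreeOf : BiGraph where
  V := {l : List (ℕ × G.V) // G.ValidW v₀ l}
  E := {l : List (ℕ × G.V) // G.ValidW v₀ l ∧ l ≠ []}
  ends := fun e => s(⟨e.val.tail, G.validW_tail v₀ e.val e.2.1⟩, ⟨e.val, e.2.1⟩)
  color := fun x => G.color (G.lab v₀ x.val)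

end BiGraph

/-! `T(Γ)` does not depend on its root: for adjacent `a`, `b`, prepending the step `b → a` and
renumbering the copies of the edge `ab` Hilbert-hotel style turns walks from `a` bijectively into
walks from `b`, so the trees rooted at the two ends of a path are isomorphic. A weak covering
`f : Γ → Γ'` is onto on neighbourhoods, so with countable valence the children of `x` in `T(Γ)`
(countably many copies of each neighbour) match those of `f x` in `T(Γ')` compatibly with `f`;
following these matchings along walks from the root gives `T(Γ, v) ≅ T(Γ', f v)`. -/

theorem Function.Surjective.exists_nat_prod_equiv {α β : Type*} [Countable α] {g : α → β}
    (hg : Function.Surjective g) : ∃ e : ℕ × α ≃ ℕ × β, ∀ p, (e p).2 = g p.2 := by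
  have hfiber : ∀ b, Nonempty ({a // g a = b} × ℕ ≃ ℕ) := fun b =>
    have : Nonempty {a // g a = b} := let ⟨a, ha⟩ := hg b; ⟨⟨a, ha⟩⟩
    nonempty_equiv_of_countable
  exact ⟨(Equiv.prodComm ℕ α).trans <|
    ((Equiv.sigmaFiberEquiv g).symm.prodCongr (Equiv.refl ℕ)).trans <|
    (Equiv.sigmaProdDistrib _ ℕ).trans <| (Equiv.sigmaCongrRight fun b => (hfiber b).some).trans <|
    (Equiv.sigmaEquivProd β ℕ).trans (Equiv.prodComm β ℕ), fun _ => rfl⟩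

namespace BiGraph

open Classical

theorem Adj.symm {G : BiGraph} {u v : G.V} (h : G.Adj u v) : G.Adj v u := by
  obtain ⟨e, he⟩ := h
  exact ⟨e, he.trans Sym2.eq_swap⟩

theorem Isomorphic.refl (G : BiGraph) : Isomorphic G G :=
  ⟨id, id, ⟨fun _ => by simp, fun _ => rfl⟩, Function.bijective_id, Function.bijective_id⟩

theorem Isomorphic.trans {G₁ G₂ G₃ : BiGraph} (h₁₂ : Isomorphic G₁ G₂) (h₂₃ : Isomorphic G₂ G₃) :
    Isomorphic G₁ G₃ := by
  obtain ⟨fV, fE, ⟨hfE, hfV⟩, hfVb, hfEb⟩ := h₁₂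
  obtain ⟨gV, gE, ⟨hgE, hgV⟩, hgVb, hgEb⟩ := h₂₃
  refine ⟨gV ∘ fV, gE ∘ fE, ⟨fun e => ?_, fun v => ?_⟩, hgVb.comp hfVb, hgEb.comp hfEb⟩
  · simp only [Function.comp_apply, hgE, hfE, Sym2.map_map]
  · simp only [Function.comp_apply, hgV, hfV]

theorem isHom_treeOf_iff {G G' : BiGraph} {a : G.V} {b : G'.V}
    (FV : (G.TreeOf a).V → (G'.TreeOf b).V) (FE : (G.TreeOf a).E → (G'.TreeOf b).E) :
    IsHom (G.TreeOf a) (G'.TreeOf b) FV FE ↔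
      (∀ e : (G.TreeOf a).E, s((FE e).1.tail, (FE e).1) =
        s((FV ⟨e.1.tail, G.validW_tail a e.1 e.2.1⟩).1, (FV ⟨e.1, e.2.1⟩).1)) ∧
      ∀ x : (G.TreeOf a).V, G'.color (G'.lab b (FV x).1) = G.color (G.lab a x.1) := by
  refine and_congr (forall_congr' fun e => ?_) Iff.rfl
  exact (Sym2.map.injective Subtype.val_injective).eq_iff.symm

section Reroot

variable {G : BiGraph}

section ForwardWalks

variable (G)

/-- `lab` and `ValidW` read a walk from its last step; these read it from its first. -/
def target : G.V → List (ℕ × G.V) → G.V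
  | v, [] => v
  | _, p :: t => target p.2 t

def IsWalk : G.V → List (ℕ × G.V) → Prop
  | _, [] => True
  | v, p :: t => G.Adj v p.2 ∧ IsWalk p.2 t

variable {G}

theorem target_append_singleton (v : G.V) (w : List (ℕ × G.V)) (p : ℕ × G.V) :
    G.target v (w ++ [p]) = p.2 := by
  induction w generalizing v with
  | nil => rfl
  | cons q t ih => exact ih q.2

theorem isWalk_append_singleton (v : G.V) (w : List (ℕ × G.V)) (p : ℕ × G.V) :
    G.IsWalk v (w ++ [p]) ↔ G.IsWalk v w ∧ G.Adj (G.target v w) p.2 := by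
  induction w generalizing v with
  | nil => simp [IsWalk, target]
  | cons q t ih => simp only [List.cons_append, IsWalk, target, ih, and_assoc]

theorem lab_eq_target_reverse (v : G.V) (l : List (ℕ × G.V)) :
    G.lab v l = G.target v l.reverse := by
  cases l with
  | nil => rfl
  | cons p t => simp [lab, target_append_singleton]

theorem validW_iff_isWalk_reverse (v : G.V) (l : List (ℕ × G.V)) :
    G.ValidW v l ↔ G.IsWalk v l.reverse := by
  induction l with
  | nil => simp [ValidW, IsWalk]
  | cons p t ih =>
    simp only [ValidW, List.reverse_cons, isWalk_append_singleton, ← ih, ← lab_eq_target_reverse]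

end ForwardWalks

noncomputable def bumpTo (a : G.V) : List (ℕ × G.V) → List (ℕ × G.V)
  | [] => []
  | (m, w) :: r => (if w = a then m + 1 else m, w) :: r

/-- A walk from `a` becomes a walk from `b` by prepending copy `0` of the step `b → a`. To make
this bijective, a first step along copy `0` of `a → b` is deleted instead (and a following step
`b → a` moves up one copy), while a first step along copy `n + 1` of `a → b` moves down to `n`. -/
noncomputable def reroot (a b : G.V) : List (ℕ × G.V) → List (ℕ × G.V)
  | [] => [(0, a)]
  | (0, x) :: r => if x = b then bumpTo a r else (0, a) :: (0, x) :: r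
  | (n + 1, x) :: r => (0, a) :: (if x = b then n else n + 1, x) :: r

theorem reroot_reroot (a b : G.V) (w : List (ℕ × G.V)) : reroot b a (reroot a b w) = w := by
  rcases w with _ | ⟨⟨_ | n, x⟩, r⟩
  · simp [reroot, bumpTo]
  · by_cases hx : x = b
    · rcases r with _ | ⟨⟨_ | m, y⟩, r⟩
      · simp [reroot, bumpTo, hx]
      all_goals by_cases hy : y = a <;> simp [reroot, bumpTo, hx, hy]
    · simp [reroot, bumpTo, hx]
  · by_cases hx : x = b <;> simp [reroot, bumpTo, hx]

theorem target_bumpTo (a v : G.V) (r : List (ℕ × G.V)) :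
    G.target v (bumpTo a r) = G.target v r := by
  rcases r with _ | ⟨⟨m, w⟩, r⟩ <;> rfl

theorem isWalk_bumpTo {a v : G.V} {r : List (ℕ × G.V)} (h : G.IsWalk v r) :
    G.IsWalk v (bumpTo a r) := by
  rcases r with _ | ⟨⟨m, w⟩, r⟩
  exacts [h, h]

theorem target_reroot (a b : G.V) (w : List (ℕ × G.V)) :
    G.target b (reroot a b w) = G.target a w := by
  rcases w with _ | ⟨⟨_ | n, x⟩, r⟩
  · rfl
  · by_cases hx : x = b
    · subst hx; simp [reroot, target_bumpTo, target]
    · simp [reroot, hx, target]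
  · simp [reroot, target]

theorem isWalk_reroot {a b : G.V} (hab : G.Adj a b) {w : List (ℕ × G.V)} (hw : G.IsWalk a w) :
    G.IsWalk b (reroot a b w) := by
  rcases w with _ | ⟨⟨_ | n, x⟩, r⟩
  · exact ⟨hab.symm, trivial⟩
  · by_cases hx : x = b
    · subst hx; simpa [reroot] using isWalk_bumpTo hw.2
    · simpa [reroot, hx, IsWalk] using ⟨hab.symm, hw⟩
  · simpa [reroot, IsWalk] using ⟨hab.symm, hw⟩

theorem bumpTo_dropLast (a : G.V) (r : List (ℕ × G.V)) :
    (bumpTo a r).dropLast = bumpTo a r.dropLast := by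
  rcases r with _ | ⟨⟨m, w⟩, _ | ⟨q, r⟩⟩ <;> simp [bumpTo]

theorem reroot_dropLast (a b : G.V) {w : List (ℕ × G.V)} (hw : w ≠ []) (hwb : w ≠ [(0, b)]) :
    (reroot a b w).dropLast = reroot a b w.dropLast := by
  rcases w with _ | ⟨⟨_ | n, x⟩, _ | ⟨q, r⟩⟩
  · exact absurd rfl hw
  · by_cases hx : x = b
    · simp_all
    · simp [reroot, hx]
  · by_cases hx : x = b <;> simp [reroot, hx, bumpTo_dropLast]
  · by_cases hx : x = b <;> simp [reroot, hx]
  · by_cases hx : x = b <;> simp [reroot, hx]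

theorem reroot_eq_nil_iff (a b : G.V) {w : List (ℕ × G.V)} : reroot a b w = [] ↔ w = [(0, b)] := by
  constructor
  · intro h
    have := reroot_reroot a b w
    rw [h] at this
    simpa [reroot] using this.symm
  · rintro rfl; simp [reroot, bumpTo]

noncomputable def rerootRev (a b : G.V) (l : List (ℕ × G.V)) : List (ℕ × G.V) :=
  (reroot a b l.reverse).reverse

theorem rerootRev_rerootRev (a b : G.V) (l : List (ℕ × G.V)) :
    rerootRev b a (rerootRev a b l) = l := by
  simp [rerootRev, reroot_reroot]

theorem validW_rerootRev {a b : G.V} (hab : G.Adj a b) {l : List (ℕ × G.V)} (hl : G.ValidW a l) :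
    G.ValidW b (rerootRev a b l) := by
  rw [validW_iff_isWalk_reverse, rerootRev, List.reverse_reverse]
  exact isWalk_reroot hab ((validW_iff_isWalk_reverse a l).mp hl)

theorem lab_rerootRev (a b : G.V) (l : List (ℕ × G.V)) :
    G.lab b (rerootRev a b l) = G.lab a l := by
  rw [lab_eq_target_reverse, lab_eq_target_reverse, rerootRev, List.reverse_reverse, target_reroot]

theorem rerootRev_eq_nil_iff (a b : G.V) {l : List (ℕ × G.V)} :
    rerootRev a b l = [] ↔ l = [(0, b)] := by
  rw [rerootRev, List.reverse_eq_nil_iff, reroot_eq_nil_iff, List.reverse_eq_cons_iff]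
  simp

theorem rerootRev_tail (a b : G.V) {l : List (ℕ × G.V)} (hl : l ≠ []) (hlb : l ≠ [(0, b)]) :
    (rerootRev a b l).tail = rerootRev a b l.tail := by
  rw [rerootRev, List.tail_reverse, reroot_dropLast a b (by simpa using hl) (by simpa using hlb),
    List.dropLast_reverse, rerootRev]

variable {a b : G.V}

noncomputable def rerootVert (hab : G.Adj a b) (x : (G.TreeOf a).V) : (G.TreeOf b).V :=
  ⟨rerootRev a b x.1, validW_rerootRev hab x.2⟩

theorem rerootVert_rerootVert (hab : G.Adj a b) (x : (G.TreeOf a).V) :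
    rerootVert hab.symm (rerootVert hab x) = x :=
  Subtype.ext (rerootRev_rerootRev a b x.1)

/-- The edge from the root `a` to its child `[(0, b)]` is the edge from the new root `b` to its
child `[(0, a)]`; every other edge is determined by the image of its child end. -/
noncomputable def rerootEdge (hab : G.Adj a b) (e : (G.TreeOf a).E) : (G.TreeOf b).E :=
  if h : e.1 = [(0, b)] then ⟨[(0, a)], ⟨trivial, hab.symm⟩, List.cons_ne_nil _ _⟩
  else ⟨rerootRev a b e.1, validW_rerootRev hab e.2.1, (rerootRev_eq_nil_iff a b).not.mpr h⟩

theorem rerootEdge_rerootEdge (hab : G.Adj a b) (e : (G.TreeOf a).E) :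
    rerootEdge hab.symm (rerootEdge hab e) = e := by
  by_cases h : e.1 = [(0, b)]
  · exact Subtype.ext (by simp [rerootEdge, h])
  · have h' : rerootRev a b e.1 ≠ [(0, a)] := by
      intro h'
      apply e.2.2
      rw [← rerootRev_rerootRev a b e.1, h']
      simp [rerootRev, reroot, bumpTo]
    apply Subtype.ext
    simp [rerootEdge, h, h', rerootRev_rerootRev]

theorem isIso_reroot (hab : G.Adj a b) :
    IsIso (G.TreeOf a) (G.TreeOf b) (rerootVert hab) (rerootEdge hab) := by
  refine ⟨(isHom_treeOf_iff _ _).mpr ⟨fun e => ?_, fun x => ?_⟩, ?_, ?_⟩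
  · by_cases h : e.1 = [(0, b)]
    · simp [rerootEdge, rerootVert, h, rerootRev, reroot, bumpTo, Sym2.eq_swap]
    · simp [rerootEdge, h, rerootVert, rerootRev_tail a b e.2.2 h]
  · exact congrArg G.color (lab_rerootRev a b x.1)
  · exact Function.bijective_iff_has_inverse.mpr
      ⟨rerootVert hab.symm, rerootVert_rerootVert hab, rerootVert_rerootVert hab.symm⟩
  · exact Function.bijective_iff_has_inverse.mpr
      ⟨rerootEdge hab.symm, rerootEdge_rerootEdge hab, rerootEdge_rerootEdge hab.symm⟩

theorem isomorphic_treeOf_of_reflTransGen (h : Relation.ReflTransGen G.Adj a b) :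
    Isomorphic (G.TreeOf a) (G.TreeOf b) := by
  induction h with
  | refl => exact Isomorphic.refl _
  | tail _ hab ih => exact ih.trans ⟨_, _, isIso_reroot hab⟩

end Reroot

section NbrEquiv

variable {G G' : BiGraph} {f : G.V → G'.V}
  (σ : ∀ x : G.V, ℕ × {w // G.Adj x w} ≃ ℕ × {w' // G'.Adj (f x) w'})

/-- The `else` branches of `liftStep` and `lowerStep` are never taken along valid walks. -/
noncomputable def liftStep (x : G.V) (p : ℕ × G.V) : ℕ × G'.V :=
  if h : G.Adj x p.2 then ((σ x (p.1, ⟨p.2, h⟩)).1, (σ x (p.1, ⟨p.2, h⟩)).2.1) else (p.1, f p.2)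

noncomputable def lowerStep (x : G.V) (q : ℕ × G'.V) : ℕ × G.V :=
  if h : G'.Adj (f x) q.2 then (((σ x).symm (q.1, ⟨q.2, h⟩)).1, ((σ x).symm (q.1, ⟨q.2, h⟩)).2.1)
  else (q.1, x)

theorem liftStep_of_adj {x : G.V} {n : ℕ} {w : G.V} (h : G.Adj x w) :
    liftStep σ x (n, w) = ((σ x (n, ⟨w, h⟩)).1, (σ x (n, ⟨w, h⟩)).2.1) :=
  dif_pos h

theorem lowerStep_of_adj {x : G.V} {n : ℕ} {w' : G'.V} (h : G'.Adj (f x) w') :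
    lowerStep σ x (n, w') = (((σ x).symm (n, ⟨w', h⟩)).1, ((σ x).symm (n, ⟨w', h⟩)).2.1) :=
  dif_pos h

theorem adj_liftStep {x : G.V} {p : ℕ × G.V} (h : G.Adj x p.2) :
    G'.Adj (f x) (liftStep σ x p).2 := by
  rw [liftStep, dif_pos h]
  exact (σ x _).2.2

theorem adj_lowerStep {x : G.V} {q : ℕ × G'.V} (h : G'.Adj (f x) q.2) :
    G.Adj x (lowerStep σ x q).2 := by
  rw [lowerStep, dif_pos h]
  exact ((σ x).symm _).2.2

theorem lowerStep_liftStep {x : G.V} {p : ℕ × G.V} (h : G.Adj x p.2) :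
    lowerStep σ x (liftStep σ x p) = p := by
  obtain ⟨n, w⟩ := p
  rw [liftStep_of_adj σ h, lowerStep_of_adj σ (σ x (n, ⟨w, h⟩)).2.2]
  simp

theorem liftStep_lowerStep {x : G.V} {q : ℕ × G'.V} (h : G'.Adj (f x) q.2) :
    liftStep σ x (lowerStep σ x q) = q := by
  obtain ⟨n, w'⟩ := q
  rw [lowerStep_of_adj σ h, liftStep_of_adj σ ((σ x).symm (n, ⟨w', h⟩)).2.2]
  simp

noncomputable def liftWalk (u : G.V) : List (ℕ × G.V) → List (ℕ × G'.V)
  | [] => []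
  | p :: t => liftStep σ (G.lab u t) p :: liftWalk u t

noncomputable def lowerWalk (u : G.V) : List (ℕ × G'.V) → List (ℕ × G.V)
  | [] => []
  | q :: t => lowerStep σ (G.lab u (lowerWalk u t)) q :: lowerWalk u t

theorem liftWalk_tail (u : G.V) (l : List (ℕ × G.V)) :
    (liftWalk σ u l).tail = liftWalk σ u l.tail := by
  cases l <;> rfl

theorem liftWalk_ne_nil (u : G.V) {l : List (ℕ × G.V)} (hl : l ≠ []) : liftWalk σ u l ≠ [] := by
  cases l
  exacts [absurd rfl hl, List.cons_ne_nil _ _]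

theorem lowerWalk_ne_nil (u : G.V) {m : List (ℕ × G'.V)} (hm : m ≠ []) : lowerWalk σ u m ≠ [] := by
  cases m
  exacts [absurd rfl hm, List.cons_ne_nil _ _]

theorem lowerWalk_liftWalk (u : G.V) {l : List (ℕ × G.V)} (hl : G.ValidW u l) :
    lowerWalk σ u (liftWalk σ u l) = l := by
  induction l with
  | nil => rfl
  | cons p t ih =>
    simp only [liftWalk, lowerWalk, ih hl.1, lowerStep_liftStep σ hl.2]

variable {σ} (hσ : ∀ x p, ((σ x p).2 : G'.V) = f p.2)
include hσ

theorem liftStep_snd {x : G.V} {p : ℕ × G.V} (h : G.Adj x p.2) :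
    (liftStep σ x p).2 = f p.2 := by
  rw [liftStep, dif_pos h]
  exact hσ x _

theorem lowerStep_snd {x : G.V} {q : ℕ × G'.V} (h : G'.Adj (f x) q.2) :
    f (lowerStep σ x q).2 = q.2 := by
  rw [lowerStep, dif_pos h, ← hσ, Equiv.apply_symm_apply]

theorem validW_liftWalk {u : G.V} {l : List (ℕ × G.V)} (hl : G.ValidW u l) :
    G'.ValidW (f u) (liftWalk σ u l) ∧ G'.lab (f u) (liftWalk σ u l) = f (G.lab u l) := by
  induction l with
  | nil => exact ⟨trivial, rfl⟩
  | cons p t ih =>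
    obtain ⟨hvalid, hlab⟩ := ih hl.1
    refine ⟨⟨hvalid, ?_⟩, liftStep_snd hσ hl.2⟩
    rw [hlab]
    exact adj_liftStep σ hl.2

theorem validW_lowerWalk {u : G.V} {m : List (ℕ × G'.V)} (hm : G'.ValidW (f u) m) :
    G.ValidW u (lowerWalk σ u m) ∧ f (G.lab u (lowerWalk σ u m)) = G'.lab (f u) m := by
  induction m with
  | nil => exact ⟨trivial, rfl⟩
  | cons q t ih =>
    obtain ⟨hvalid, hlab⟩ := ih hm.1
    have hadj : G'.Adj (f (G.lab u (lowerWalk σ u t))) q.2 := hlab ▸ hm.2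
    exact ⟨⟨hvalid, adj_lowerStep σ hadj⟩, lowerStep_snd hσ hadj⟩

theorem liftWalk_lowerWalk {u : G.V} {m : List (ℕ × G'.V)} (hm : G'.ValidW (f u) m) :
    liftWalk σ u (lowerWalk σ u m) = m := by
  induction m with
  | nil => rfl
  | cons q t ih =>
    have hadj : G'.Adj (f (G.lab u (lowerWalk σ u t))) q.2 := (validW_lowerWalk hσ hm.1).2 ▸ hm.2
    simp only [lowerWalk, liftWalk, ih hm.1, liftStep_lowerStep σ hadj]

theorem isomorphic_treeOf_of_nbrEquiv (hcol : ∀ v, G'.color (f v) = G.color v) (u : G.V) :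
    Isomorphic (G.TreeOf u) (G'.TreeOf (f u)) := by
  let FV : (G.TreeOf u).V → (G'.TreeOf (f u)).V :=
    fun x => ⟨liftWalk σ u x.1, (validW_liftWalk hσ x.2).1⟩
  let FE : (G.TreeOf u).E → (G'.TreeOf (f u)).E :=
    fun e => ⟨liftWalk σ u e.1, (validW_liftWalk hσ e.2.1).1, liftWalk_ne_nil σ u e.2.2⟩
  refine ⟨FV, FE, (isHom_treeOf_iff FV FE).mpr ⟨fun e => ?_, fun x => ?_⟩, ?_, ?_⟩
  · simp only [FV, FE, liftWalk_tail]
  · simp only [FV, (validW_liftWalk hσ x.2).2, hcol]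
  · exact Function.bijective_iff_has_inverse.mpr
      ⟨fun y => ⟨lowerWalk σ u y.1, (validW_lowerWalk hσ y.2).1⟩,
        fun x => Subtype.ext (lowerWalk_liftWalk σ u x.2),
        fun y => Subtype.ext (liftWalk_lowerWalk hσ y.2)⟩
  · exact Function.bijective_iff_has_inverse.mpr
      ⟨fun e => ⟨lowerWalk σ u e.1, (validW_lowerWalk hσ e.2.1).1, lowerWalk_ne_nil σ u e.2.2⟩,
        fun e => Subtype.ext (lowerWalk_liftWalk σ u e.2.1),
        fun e => Subtype.ext (liftWalk_lowerWalk hσ e.2.1)⟩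

end NbrEquiv

theorem CountableValence.countable_adj {G : BiGraph} (hcv : G.CountableValence) (x : G.V) :
    Countable {w // G.Adj x w} := by
  have := hcv x
  refine Function.Injective.countable (f := fun w : {w // G.Adj x w} =>
    (⟨w.2.choose, by rw [w.2.choose_spec]; exact Sym2.mem_mk_left _ _⟩ :
      {e : G.E // x ∈ G.ends e})) fun w₁ w₂ h => Subtype.ext ?_
  have h₁ := w₁.2.choose_spec
  rw [show w₁.2.choose = w₂.2.choose from congrArg Subtype.val h, w₂.2.choose_spec] at h₁
  exact Sym2.congr_right.mp h₁.symm

namespace IsWeakCovering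

variable {G G' : BiGraph} {fV : G.V → G'.V} {fE : G.E → G'.E} (hwc : IsWeakCovering G G' fV fE)
include hwc

theorem adj_map {x w : G.V} (h : G.Adj x w) : G'.Adj (fV x) (fV w) := by
  obtain ⟨e, he⟩ := h
  exact ⟨fE e, by rw [hwc.1.1 e, he, Sym2.map_mk]⟩

theorem exists_adj_of_adj {x : G.V} {w' : G'.V} (h : G'.Adj (fV x) w') :
    ∃ w, G.Adj x w ∧ fV w = w' := by
  obtain ⟨e', he'⟩ := h
  obtain ⟨e, hx, rfl⟩ := hwc.2 x e' (he' ▸ Sym2.mem_mk_left _ _)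
  obtain ⟨w, hw⟩ := Sym2.mem_iff_exists.mp hx
  refine ⟨w, ⟨e, hw⟩, ?_⟩
  rw [hwc.1.1 e, hw, Sym2.map_mk] at he'
  exact Sym2.congr_right.mp he'

theorem exists_nbrEquiv (hcv : G.CountableValence) (x : G.V) :
    ∃ σ : ℕ × {w // G.Adj x w} ≃ ℕ × {w' // G'.Adj (fV x) w'}, ∀ p, ((σ p).2 : G'.V) = fV p.2 := by
  have := hcv.countable_adj x
  obtain ⟨σ, hσ⟩ := Function.Surjective.exists_nat_prod_equiv
    (g := fun w : {w // G.Adj x w} => (⟨fV w, hwc.adj_map w.2⟩ : {w' // G'.Adj (fV x) w'}))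
    fun w' => let ⟨w, hw, hfw⟩ := hwc.exists_adj_of_adj w'.2; ⟨⟨w, hw⟩, Subtype.ext hfw⟩
  exact ⟨σ, fun p => congrArg Subtype.val (hσ p)⟩

theorem isomorphic_treeOf (hcv : G.CountableValence) (u : G.V) :
    Isomorphic (G.TreeOf u) (G'.TreeOf (fV u)) := by
  choose σ hσ using hwc.exists_nbrEquiv hcv
  exact isomorphic_treeOf_of_nbrEquiv hσ hwc.1.2 u

end IsWeakCovering

end BiGraph

theorem treeOf_invariant_under_weakCovering_general (G G' : BiGraph) (v₀ : G.V) (v₀' : G'.V)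
    (hconn' : G'.Connected)
    (hcv : G.CountableValence)
    (h : BiGraph.Covers G G') :
    BiGraph.Isomorphic (G.TreeOf v₀) (G'.TreeOf v₀') := by
  obtain ⟨fV, fE, hwc⟩ := h
  exact (hwc.isomorphic_treeOf hcv v₀).trans
    (BiGraph.isomorphic_treeOf_of_reflTransGen (hconn' (fV v₀) v₀'))

/-- If a connected bicolored graph `G` of countable valence weakly
covers `G'` (connected, countable valence), then their canonical bicolored trees
are isomorphic. -/
theorem treeOf_invariant_under_weakCovering (G G' : BiGraph) (v₀ : G.V) (v₀' : G'.V)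
    (hconn : G.Connected) (hconn' : G'.Connected)
    (hcv : G.CountableValence) (hcv' : G'.CountableValence)
    (h : BiGraph.Covers G G') :
    BiGraph.Isomorphic (G.TreeOf v₀) (G'.TreeOf v₀') :=
  treeOf_invariant_under_weakCovering_general G G' v₀ v₀' hconn' hcv h
end
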